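/- Probability of the active state for the externally regulated gene: for all real a, b with 0 < a < b and all real ν > 0, in the case θ = 1 one has ∑_{n=0}^∞ P_{1,n} = a/b. -/

import Mathlib

open scoped BigOperators

/-- Pochhammer symbol `(a)ₙ = a(a+1)⋯(a+n−1)`, `(a)₀ = 1`. -/
noncomputable def poch (a : ℝ) (n : ℕ) : ℝ := ∏ k ∈ Finset.range n, (a + k)

/-- Kummer's confluent hypergeometric function `M(a,b,z)`. -/
noncomputable def kummerM (a b z : ℝ) : ℝ :=
  ∑' k : ℕ, poch a k / poch b k * z ^ k / (Nat.factorial k : ℝ)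

/-- Steady-state probability `P_{0,n}` of the binary gene model. -/
noncomputable def P0 (a b ν θ : ℝ) (n : ℕ) : ℝ :=
  (b - a) / (kummerM a b (ν * (1 - θ)) * b) * (ν ^ n / (Nat.factorial n : ℝ)) *
    (poch a n / poch (1 + b) n) * kummerM (a + n) (1 + b + n) (-(ν * θ))

/-- Steady-state probability `P_{1,n}` of the binary gene model. -/
noncomputable def P1 (a b ν θ : ℝ) (n : ℕ) : ℝ :=
  a / (kummerM a b (ν * (1 - θ)) * b) * (ν ^ n / (Nat.factorial n : ℝ)) *
    (poch (1 + a) n / poch (1 + b) n) * kummerM (1 + a + n) (1 + b + n) (-(ν * θ))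


lemma poch_zero (a : ℝ) : poch a 0 = 1 := by simp [poch]

lemma poch_pos {x : ℝ} (hx : 0 < x) (n : ℕ) : 0 < poch x n := by
  apply Finset.prod_pos
  intro k _
  positivity

lemma poch_add (x : ℝ) (m k : ℕ) : poch x (m + k) = poch x m * poch (x + m) k := by
  rw [poch, poch, poch, Finset.prod_range_add]
  congr 1
  apply Finset.prod_congr rfl
  intro j _
  push_cast
  ring

lemma poch_mono {x y : ℝ} (hx : 0 < x) (hxy : x ≤ y) (n : ℕ) : poch x n ≤ poch y n := by
  apply Finset.prod_le_prod
  · intro k _; positivity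
  · intro k _; linarith

lemma kummerM_zero (a b : ℝ) : kummerM a b 0 = 1 := by
  rw [kummerM, tsum_eq_single 0]
  · simp [poch_zero]
  · intro k hk
    simp [zero_pow hk]

lemma tsum_prod_eq_tsum_antidiagonal {f : ℕ × ℕ → ℝ} (h : Summable f) :
    ∑' p : ℕ × ℕ, f p = ∑' n, ∑ kl ∈ Finset.HasAntidiagonal.antidiagonal n, f kl := by
  conv_rhs => congr; ext; rw [← Finset.sum_finset_coe, ← tsum_fintype (L := SummationFilter.unconditional _)]
  rw [← Finset.HasAntidiagonal.sigmaAntidiagonalEquivProd.tsum_eq f]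
  exact Summable.tsum_sigma' (fun n => (hasSum_fintype _).summable)
    (Finset.HasAntidiagonal.sigmaAntidiagonalEquivProd.summable_iff.mpr h)

lemma alt_sum (m : ℕ) :
    ∑ i ∈ Finset.range (m + 1), ((-1 : ℝ)) ^ i * (m.choose i : ℝ)
      = if m = 0 then 1 else 0 := by
  have := Int.alternating_sum_range_choose (n := m)
  have h2 : ((∑ i ∈ Finset.range (m + 1), (-1 : ℤ) ^ i * (m.choose i : ℤ) : ℤ) : ℝ)
      = ((if m = 0 then 1 else 0 : ℤ) : ℝ) := by rw [this]
  push_cast at h2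
  rw [h2]


/-- Probability of the active state for the externally regulated gene. -/
theorem prob_active_state_external (a b ν : ℝ) (ha : 0 < a) (hab : a < b)
    (hν : 0 < ν) :
    (∑' n : ℕ, P1 a b ν 1 n) = a / b := by
  have hb : 0 < b := ha.trans hab
  have h1a : (0:ℝ) < 1 + a := by linarith
  have h1b : (0:ℝ) < 1 + b := by linarith
  set f : ℕ × ℕ → ℝ := fun p =>
    poch (1+a) (p.1+p.2) / poch (1+b) (p.1+p.2) * ν^(p.1+p.2) * (-1)^p.2
      / ((p.1.factorial : ℝ) * (p.2.factorial : ℝ)) with hf_def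
  -- summability
  have hg : Summable (fun p : ℕ × ℕ => ν^p.1 / p.1.factorial * (ν^p.2 / p.2.factorial)) := by
    apply (Real.summable_pow_div_factorial ν).mul_of_nonneg (Real.summable_pow_div_factorial ν)
    · intro n; positivity
    · intro n; positivity
  have habs : ∀ p : ℕ × ℕ, |f p| ≤ ν^p.1 / p.1.factorial * (ν^p.2 / p.2.factorial) := by
    intro ⟨n, k⟩
    have hpa := poch_pos h1a (n + k)
    have hpb := poch_pos h1b (n + k)
    have hfn : (0:ℝ) < n.factorial := by exact_mod_cast n.factorial_pos
    have hfk : (0:ℝ) < k.factorial := by exact_mod_cast k.factorial_pos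
    have h1 : |f (n, k)| = poch (1+a) (n+k) / poch (1+b) (n+k) * ν^(n+k)
        / ((n.factorial : ℝ) * (k.factorial : ℝ)) := by
      simp only [hf_def]
      rw [abs_div, abs_mul, abs_mul, abs_pow, abs_pow, abs_neg, abs_one, one_pow, mul_one,
        abs_div, abs_of_pos hpa, abs_of_pos hpb, abs_of_pos hν,
        abs_of_pos (mul_pos hfn hfk)]
    rw [h1]
    have hratio : poch (1+a) (n+k) / poch (1+b) (n+k) ≤ 1 := by
      rw [div_le_one hpb]
      exact poch_mono h1a (by linarith) _
    have : poch (1+a) (n+k) / poch (1+b) (n+k) * ν^(n+k)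
        / ((n.factorial : ℝ) * (k.factorial : ℝ))
        ≤ 1 * ν^(n+k) / ((n.factorial : ℝ) * (k.factorial : ℝ)) := by
      gcongr
    refine this.trans_eq ?_
    rw [pow_add]
    field_simp
    try ring
  have hf : Summable f := by
    apply Summable.of_abs
    exact hg.of_nonneg_of_le (fun p => abs_nonneg _) habs
  -- P1 in terms of f
  have hP1 : ∀ n : ℕ, P1 a b ν 1 n = a / b * ∑' k, f (n, k) := by
    intro n
    rw [P1, show ν * (1 - 1) = 0 by ring, kummerM_zero, kummerM, ← tsum_mul_left,
      ← tsum_mul_left]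
    apply tsum_congr
    intro k
    have hpan := poch_pos h1a n
    have hpbn := poch_pos h1b n
    have hpak : (0:ℝ) < poch (1 + a + n) k := poch_pos (by positivity) k
    have hpbk : (0:ℝ) < poch (1 + b + n) k := poch_pos (by positivity) k
    have hfn : (n.factorial : ℝ) ≠ 0 := by exact_mod_cast n.factorial_ne_zero
    have hfk : (k.factorial : ℝ) ≠ 0 := by exact_mod_cast k.factorial_ne_zero
    simp only [hf_def]
    rw [poch_add (1+a) n k, poch_add (1+b) n k,
      show (-(ν * 1)) = -ν by ring, neg_pow, pow_add]
    field_simp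
  -- main computation
  have hsum1 : (∑' n : ℕ, ∑' k : ℕ, f (n, k)) = 1 := by
    rw [← Summable.tsum_prod' hf (fun n => hf.prod_factor n),
      tsum_prod_eq_tsum_antidiagonal hf, tsum_eq_single 0]
    · rw [show Finset.HasAntidiagonal.antidiagonal 0 = {(0,0)} from rfl, Finset.sum_singleton]
      simp [hf_def, poch_zero]
    · intro m hm
      rw [Finset.Nat.sum_antidiagonal_eq_sum_range_succ_mk]
      have key : ∀ i ∈ Finset.range (m+1), f (i, m - i)
          = (poch (1+a) m / poch (1+b) m * ν^m / m.factorial)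
            * ((-1:ℝ)^(m-i) * (m.choose i : ℝ)) := by
        intro i hi
        have hi' : i ≤ m := Nat.lt_succ_iff.mp (Finset.mem_range.mp hi)
        have him : i + (m - i) = m := Nat.add_sub_cancel' hi'
        have hfi : (i.factorial : ℝ) ≠ 0 := by exact_mod_cast i.factorial_ne_zero
        have hfmi : ((m-i).factorial : ℝ) ≠ 0 := by exact_mod_cast (m-i).factorial_ne_zero
        have hfm : (m.factorial : ℝ) ≠ 0 := by exact_mod_cast m.factorial_ne_zero
        have hpb := (poch_pos h1b m).ne'
        simp only [hf_def, him]
        rw [Nat.cast_choose ℝ hi']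
        field_simp
      rw [Finset.sum_congr rfl key, ← Finset.mul_sum]
      have : ∑ i ∈ Finset.range (m+1), ((-1:ℝ))^(m-i) * (m.choose i : ℝ) = 0 := by
        have h := alt_sum m
        rw [if_neg hm] at h
        rw [← h, ← Finset.sum_range_reflect (fun i => ((-1:ℝ))^i * (m.choose i : ℝ)) (m+1)]
        apply Finset.sum_congr rfl
        intro j hj
        have hj' : j ≤ m := Nat.lt_succ_iff.mp (Finset.mem_range.mp hj)
        simp only [Nat.add_sub_cancel]
        rw [Nat.choose_symm hj']
      rw [this, mul_zero]
  calc (∑' n : ℕ, P1 a b ν 1 n) = ∑' n : ℕ, a / b * ∑' k, f (n, k) := by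
        exact tsum_congr hP1
    _ = a / b * ∑' n : ℕ, ∑' k, f (n, k) := tsum_mul_left
    _ = a / b := by rw [hsum1, mul_one]
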